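/- Let $g_2(r_4) = -\frac{4(r_4-1)^3(r_4+1)^2(r_4^2+r_4+1)}{r_4^4 + 16r_4^3 - 2r_4^2 + 1}$. Then for all $r_4 \in (0, 1)$, $0 < g_2(r_4) < 4$, with $g_2(1) = 0$ and $\lim_{r_4 \to 0^+} g_2(r_4) = 4$. -/

import Mathlib

/-!
Since `(r - 1)(r² + r + 1) = r³ - 1`, the numerator of `g2` is `4 (1 - r²)² (1 - r³)` and its
denominator is `(1 - r²)² + 16 r³`; then `4 - g2 r = 4 r³ ((1 - r²)² + 16) / ((1 - r²)² + 16 r³)`,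
so both bounds are positivity statements on `0 < r < 1`. The limit is continuity at `0`,
where `g2 0 = 4`.
-/

open Filter Topology

/-- The function `g2` giving `m3` for collinear Euler-Lagrange points with `0 < r4 < 1`. -/
noncomputable def g2 (r4 : ℝ) : ℝ :=
  -(4 * (r4 - 1)^3 * (r4 + 1)^2 * (r4^2 + r4 + 1)) / (r4^4 + 16*r4^3 - 2*r4^2 + 1)

lemma g2_eq (r : ℝ) : g2 r = 4 * (1 - r^2)^2 * (1 - r^3) / ((1 - r^2)^2 + 16 * r^3) := by
  unfold g2
  congr 1 <;> ring

lemma g2_den_pos {r : ℝ} (hr : 0 ≤ r) : 0 < (1 - r^2)^2 + 16 * r^3 := by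
  rcases hr.eq_or_lt with rfl | hr
  · norm_num
  · positivity

lemma four_sub_g2 {r : ℝ} (hr : 0 ≤ r) :
    4 - g2 r = 4 * r^3 * ((1 - r^2)^2 + 16) / ((1 - r^2)^2 + 16 * r^3) := by
  rw [g2_eq, eq_div_iff (g2_den_pos hr).ne', sub_mul, div_mul_cancel₀ _ (g2_den_pos hr).ne']
  ring

lemma g2_pos {r : ℝ} (h₀ : 0 ≤ r) (h₁ : r < 1) : 0 < g2 r := by
  have hsq : 0 < 1 - r^2 := sub_pos.mpr (pow_lt_one₀ h₀ h₁ two_ne_zero)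
  have hcube : 0 < 1 - r^3 := sub_pos.mpr (pow_lt_one₀ h₀ h₁ three_ne_zero)
  rw [g2_eq]
  exact div_pos (by positivity) (g2_den_pos h₀)

lemma g2_lt_four {r : ℝ} (hr : 0 < r) : g2 r < 4 :=
  sub_pos.mp (by rw [four_sub_g2 hr.le]; positivity)

lemma g2_zero : g2 0 = 4 := by norm_num [g2]

lemma g2_one : g2 1 = 0 := by norm_num [g2]

lemma continuousAt_g2_zero : ContinuousAt g2 0 :=
  ContinuousAt.div (by fun_prop) (by fun_prop) (by norm_num)

/-- for `0 < r4 < 1` we have `0 < g2 r4 < 4`; moreover `g2 1 = 0` and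
`g2 r4 → 4` as `r4 → 0⁺`. -/
theorem g2_range :
    (∀ r4 : ℝ, 0 < r4 → r4 < 1 → (0 < g2 r4 ∧ g2 r4 < 4)) ∧
    g2 1 = 0 ∧
    Tendsto g2 (𝓝[>] 0) (𝓝 4) := by
  refine ⟨fun r h₀ h₁ => ⟨g2_pos h₀.le h₁, g2_lt_four h₀⟩, g2_one, ?_⟩
  rw [← g2_zero]
  exact continuousAt_g2_zero.continuousWithinAt.tendsto
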